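/- In a DAG, if a and b are d-separated given D, a and b are d-connected given D ∪ {s}, and s is an ancestor of b, then a contradiction follows; that is, if a ⊥_d b | D and a ⊥̸_d b | D ∪ {s}, then s is not an ancestor of b (and by symmetry not an ancestor of a). -/

import Mathlib

structure MDAG (V : Type) where
  dir : V → V → Prop
  face : Finset V → Prop

namespace MDAG

variable {V : Type}

/-- Two vertices lie in a common bidirected face. -/
def bi (G : MDAG V) (a b : V) : Prop := a ≠ b ∧ ∃ F, G.face F ∧ a ∈ F ∧ b ∈ F

inductive EdgeKind | out | inn | bid

/-- `out` is `a → b`, `inn` is `a ← b`, `bid` is a bidirected edge. -/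
def isEdge (G : MDAG V) : EdgeKind → V → V → Prop
  | .out, a, b => G.dir a b
  | .inn, a, b => G.dir b a
  | .bid, a, b => G.bi a b

/-- The edge has an arrowhead at its right endpoint. -/
def EdgeKind.headRight : EdgeKind → Prop
  | .out => True | .inn => False | .bid => True

/-- The edge has an arrowhead at its left endpoint. -/
def EdgeKind.headLeft : EdgeKind → Prop
  | .out => False | .inn => True | .bid => True

inductive Walk (G : MDAG V) : V → V → Type
  | nil (v : V) : Walk G v v
  | cons {a b c : V} (e : EdgeKind) (h : G.isEdge e a b) (w : Walk G b c) : Walk G a c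

def Walk.support {G : MDAG V} : {a b : V} → Walk G a b → List V
  | _, _, .nil v => [v]
  | _, _, @Walk.cons _ _ a _ _ _ _ w => a :: w.support

/-- A path is a walk with no repeated vertices. -/
def Walk.IsPath {G : MDAG V} {a b : V} (w : G.Walk a b) : Prop := w.support.Nodup

/-- Auxiliary: `ph` records whether the previous edge has an arrowhead at the
current start vertex, which is internal to the overall walk. -/
def Walk.openTail {G : MDAG V} (C : Set V) : {a b : V} → Walk G a b → Prop → Prop
  | _, _, .nil _, _ => True
  | _, _, @Walk.cons _ _ m _ _ e' h' w, ph =>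
      ((ph ∧ e'.headLeft) → ∃ d ∈ C, Relation.ReflTransGen G.dir m d) ∧
      (¬ (ph ∧ e'.headLeft) → m ∉ C) ∧
      Walk.openTail C w e'.headRight

/-- The walk is open (active) given conditioning set `C`: every internal
collider has a descendant in `C` and no internal non-collider lies in `C`. -/
def Walk.openGiven {G : MDAG V} (C : Set V) : {a b : V} → Walk G a b → Prop
  | _, _, .nil _ => True
  | _, _, .cons e _ w => Walk.openTail C w e.headRight

def Walk.colliderTail {G : MDAG V} (v : V) : {a b : V} → Walk G a b → Prop → Prop
  | _, _, .nil _, _ => False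
  | _, _, @Walk.cons _ _ m _ _ e' h' w, ph =>
      (v = m ∧ ph ∧ e'.headLeft) ∨ Walk.colliderTail v w e'.headRight

/-- `v` occurs as a collider on the walk. -/
def Walk.isColliderOn {G : MDAG V} (v : V) : {a b : V} → Walk G a b → Prop
  | _, _, .nil _ => False
  | _, _, .cons e _ w => Walk.colliderTail v w e.headRight

/-- m-separation: every path from `A` to `B` is blocked by `C`. -/
def mSep (G : MDAG V) (A B C : Set V) : Prop :=
  ∀ a ∈ A, ∀ b ∈ B, ∀ w : G.Walk a b, w.IsPath → ¬ w.openGiven C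

end MDAG

open MDAG Relation in
/-- d-separation in a DAG `H`, realized as m-separation in an mDAG with no
bidirected faces. -/
def dSep {V : Type} (H : V → V → Prop) (A B C : Set V) : Prop :=
  MDAG.mSep ⟨H, fun _ => False⟩ A B C

/-!
A path from `a` to `b` that is open given `D ∪ {s}` but blocked given `D` must pass through a
collider `m` whose descendants meet `D ∪ {s}` but not `D`, so `m` is an ancestor of `s`. Take the
first such collider. If `s` were an ancestor of `b`, there would be a directed path from `m` to
`b`; its vertices are descendants of `m`, hence outside `D`. Follow the original path from `a`
until it first meets this directed path and continue along it to `b`: every vertex where the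
two pieces join is left through a tail, so it is a non-collider outside `D`, and the spliced path
is open given `D`, contradicting the separation. The claim for `a` follows because reversing a
path keeps its colliders, so m-separation is symmetric.
-/

open Relation

namespace MDAG

variable {V : Type} {G : MDAG V}

def EdgeKind.reverse : EdgeKind → EdgeKind
  | .out => .inn
  | .inn => .out
  | .bid => .bid

@[simp]
theorem EdgeKind.headLeft_reverse (e : EdgeKind) : e.reverse.headLeft = e.headRight := by
  cases e <;> rfl

@[simp]
theorem EdgeKind.headRight_reverse (e : EdgeKind) : e.reverse.headRight = e.headLeft := by
  cases e <;> rfl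

theorem bi.symm {a b : V} (h : G.bi a b) : G.bi b a :=
  let ⟨hab, F, hF, ha, hb⟩ := h
  ⟨hab.symm, F, hF, hb, ha⟩

theorem isEdge.reverse : ∀ {e : EdgeKind} {a b : V}, G.isEdge e a b → G.isEdge e.reverse b a
  | .out, _, _, h => h
  | .inn, _, _, h => h
  | .bid, _, _, h => bi.symm h

structure Dart (V : Type) where
  src : V
  kind : EdgeKind
  tgt : V

def Dart.reverse (d : Dart V) : Dart V := ⟨d.tgt, d.kind.reverse, d.src⟩

/-- Stated on consecutive darts (`openGiven_iff_isChain`), openness is visibly invariant under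
reversal. -/
def IsActive (G : MDAG V) (C : Set V) (d₁ d₂ : Dart V) : Prop :=
  d₁.tgt = d₂.src ∧
    (d₁.kind.headRight ∧ d₂.kind.headLeft → ∃ c ∈ C, ReflTransGen G.dir d₁.tgt c) ∧
    (¬ (d₁.kind.headRight ∧ d₂.kind.headLeft) → d₁.tgt ∉ C)

theorem isActive_reverse {C : Set V} {d₁ d₂ : Dart V} :
    G.IsActive C d₂.reverse d₁.reverse ↔ G.IsActive C d₁ d₂ := by
  simp only [IsActive, Dart.reverse, EdgeKind.headLeft_reverse, EdgeKind.headRight_reverse]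
  constructor <;> rintro ⟨h, hcoll, hncoll⟩ <;> rw [h] at * <;>
    exact ⟨rfl, fun h' => hcoll h'.symm, fun h' => hncoll fun h'' => h' h''.symm⟩

namespace Walk

variable {C C' : Set V} {x y m b : V}

@[simp]
theorem support_cons {e : EdgeKind} {z : V} (h : G.isEdge e x z) (w : G.Walk z y) :
    (cons e h w).support = x :: w.support := rfl

theorem support_eq_cons (w : G.Walk x y) : w.support = x :: w.support.tail := by
  cases w <;> rfl

theorem start_mem_support (w : G.Walk x y) : x ∈ w.support := by
  rw [support_eq_cons]
  exact List.mem_cons_self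

theorem IsPath.of_cons {e : EdgeKind} {z : V} {h : G.isEdge e x z} {w : G.Walk z y}
    (hw : (cons e h w).IsPath) : w.IsPath :=
  (List.nodup_cons.mp hw).2

theorem IsPath.not_mem_of_cons {e : EdgeKind} {z : V} {h : G.isEdge e x z} {w : G.Walk z y}
    (hw : (cons e h w).IsPath) : x ∉ w.support :=
  (List.nodup_cons.mp hw).1

theorem IsPath.cons {e : EdgeKind} {z : V} (h : G.isEdge e x z) {w : G.Walk z y}
    (hw : w.IsPath) (hx : x ∉ w.support) : (cons e h w).IsPath :=
  List.nodup_cons.mpr ⟨hx, hw⟩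

def darts : {x y : V} → G.Walk x y → List (Dart V)
  | _, _, nil _ => []
  | x, _, @cons _ _ _ z _ e _ w => ⟨x, e, z⟩ :: w.darts

theorem openTail_iff_isChain :
    ∀ {x y : V} (w : G.Walk x y) (d : Dart V), d.tgt = x →
      (w.openTail C d.kind.headRight ↔ (d :: w.darts).IsChain (G.IsActive C))
  | _, _, nil _, _, _ => iff_of_true trivial (List.isChain_singleton _)
  | _, _, cons e _ w, d, hd => by
    rw [darts, List.isChain_cons_cons, ← openTail_iff_isChain w _ rfl]
    simp only [openTail, IsActive, hd, true_and, and_assoc]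

theorem openGiven_iff_isChain : ∀ {x y : V} (w : G.Walk x y),
    w.openGiven C ↔ w.darts.IsChain (G.IsActive C)
  | _, _, nil _ => iff_of_true trivial List.isChain_nil
  | x, _, @cons _ _ _ z _ e _ w => openTail_iff_isChain w ⟨x, e, z⟩ rfl

def reverseAux : {x y z : V} → G.Walk x y → G.Walk x z → G.Walk y z
  | _, _, _, nil _, acc => acc
  | _, _, _, cons _ h w, acc => w.reverseAux (cons _ h.reverse acc)

def reverse (w : G.Walk x y) : G.Walk y x := w.reverseAux (nil x)

theorem support_reverseAux : ∀ {x y z : V} (w : G.Walk x y) (acc : G.Walk x z),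
    (w.reverseAux acc).support = w.support.reverse ++ acc.support.tail
  | _, _, _, nil _, acc => by rw [reverseAux, support_eq_cons acc]; rfl
  | _, _, _, cons _ _ w, acc => by
    rw [reverseAux, support_reverseAux w, support_cons, support_cons, support_eq_cons acc]
    simp

theorem darts_reverseAux : ∀ {x y z : V} (w : G.Walk x y) (acc : G.Walk x z),
    (w.reverseAux acc).darts = (w.darts.map Dart.reverse).reverse ++ acc.darts
  | _, _, _, nil _, _ => rfl
  | _, _, _, cons _ _ w, acc => by
    rw [reverseAux, darts_reverseAux w, darts, darts]
    simp [Dart.reverse]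

theorem IsPath.reverse {w : G.Walk x y} (hw : w.IsPath) : w.reverse.IsPath := by
  rw [Walk.IsPath, Walk.reverse, support_reverseAux]
  simpa [Walk.IsPath, Walk.support] using hw

theorem openGiven_reverse {w : G.Walk x y} : w.reverse.openGiven C ↔ w.openGiven C := by
  rw [openGiven_iff_isChain, openGiven_iff_isChain, Walk.reverse, darts_reverseAux]
  simp only [darts, List.append_nil, List.isChain_reverse, List.isChain_map]
  exact List.IsChain.iff fun _ _ => isActive_reverse

def IsDirected : {x y : V} → G.Walk x y → Prop
  | _, _, nil _ => True
  | _, _, cons e _ w => e = .out ∧ w.IsDirected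

theorem IsDirected.reflTransGen {v : V} :
    ∀ {x y : V} {w : G.Walk x y}, w.IsDirected → v ∈ w.support → ReflTransGen G.dir x v
  | _, _, nil _, _, hv => by
    obtain rfl := List.mem_singleton.mp hv
    exact .refl
  | _, _, cons .out h w, hw, hv => by
    rcases List.mem_cons.mp hv with rfl | hv
    · exact .refl
    · exact .head h (hw.2.reflTransGen hv)

theorem IsDirected.exists_suffix {v : V} :
    ∀ {x y : V} {w : G.Walk x y}, w.IsDirected → v ∈ w.support →
      ∃ S : G.Walk v y, S.IsDirected ∧ S.support <:+ w.support
  | _, _, nil _, hw, hv => by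
    rw [List.mem_singleton.mp hv]
    exact ⟨_, hw, List.suffix_refl _⟩
  | _, _, cons e h w, hw, hv => by
    rcases List.mem_cons.mp hv with rfl | hv
    · exact ⟨_, hw, List.suffix_refl _⟩
    · obtain ⟨S, hS, hsuf⟩ := hw.2.exists_suffix hv
      exact ⟨S, hS, hsuf.trans (List.suffix_cons _ _)⟩

theorem exists_isDirected_isPath (hxy : ReflTransGen G.dir x y) :
    ∃ w : G.Walk x y, w.IsDirected ∧ w.IsPath := by
  induction hxy using ReflTransGen.head_induction_on with
  | refl => exact ⟨nil y, trivial, List.nodup_singleton y⟩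
  | @head x z hxz _ ih =>
    obtain ⟨w, hw, hp⟩ := ih
    by_cases hx : x ∈ w.support
    · obtain ⟨S, hS, hsuf⟩ := hw.exists_suffix hx
      exact ⟨S, hS, hp.sublist hsuf.sublist⟩
    · exact ⟨cons .out hxz w, ⟨rfl, hw⟩, hp.cons (e := .out) hxz hx⟩

theorem IsDirected.openTail (ph : Prop) :
    ∀ {x y : V} {w : G.Walk x y}, w.IsDirected → (∀ v ∈ w.support, v ∉ C) →
      w.openTail C ph
  | _, _, nil _, _, _ => trivial
  | _, _, cons .out _ _, hw, hC =>
    ⟨fun h => h.2.elim, fun _ => hC _ List.mem_cons_self,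
      hw.2.openTail _ fun v hv => hC v (List.mem_cons_of_mem _ hv)⟩

theorem IsDirected.openGiven :
    ∀ {x y : V} {w : G.Walk x y}, w.IsDirected → (∀ v ∈ w.support, v ∉ C) →
      w.openGiven C
  | _, _, nil _, _, _ => trivial
  | _, _, cons .out _ _, hw, hC => hw.2.openTail _ fun v hv => hC v (List.mem_cons_of_mem _ hv)

theorem exists_openTail_prefix (hCC : C ⊆ C') :
    ∀ {x y : V} (w : G.Walk x y) (ph : Prop), w.openTail C' ph → ¬ w.openTail C ph →
      ∃ m, (∃ d ∈ C', ReflTransGen G.dir m d) ∧ (∀ d ∈ C, ¬ ReflTransGen G.dir m d) ∧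
        ∃ w₁ : G.Walk x m, w₁.openTail C ph ∧ w₁.support <+: w.support
  | _, _, nil _, _, _, hblocked => absurd trivial hblocked
  | x, _, cons e h w, ph, hopen, hblocked => by
    obtain ⟨hcoll, hncoll, hopen⟩ := hopen
    have hncollC : ¬ (ph ∧ e.headLeft) → x ∉ C := fun hn hx => hncoll hn (hCC hx)
    by_cases hcollC : (ph ∧ e.headLeft) → ∃ d ∈ C, ReflTransGen G.dir x d
    · obtain ⟨m, hmC', hmC, w₁, hw₁, hpre⟩ :=
        exists_openTail_prefix hCC w e.headRight hopen fun h => hblocked ⟨hcollC, hncollC, h⟩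
      exact ⟨m, hmC', hmC, cons e h w₁, ⟨hcollC, hncollC, hw₁⟩,
        (List.prefix_cons_inj x).mpr hpre⟩
    · push Not at hcollC
      exact ⟨x, hcoll hcollC.1, hcollC.2, nil x, trivial, ⟨w.support, rfl⟩⟩

theorem exists_openGiven_prefix (hCC : C ⊆ C') (w : G.Walk x y) (hw' : w.openGiven C')
    (hw : ¬ w.openGiven C) :
    ∃ m, (∃ d ∈ C', ReflTransGen G.dir m d) ∧ (∀ d ∈ C, ¬ ReflTransGen G.dir m d) ∧
      ∃ w₁ : G.Walk x m, w₁.openGiven C ∧ w₁.support <+: w.support := by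
  cases w with
  | nil => exact absurd trivial hw
  | cons e h w =>
    obtain ⟨m, hmC', hmC, w₁, hw₁, hpre⟩ := exists_openTail_prefix hCC w _ hw' hw
    exact ⟨m, hmC', hmC, cons e h w₁, hw₁, (List.prefix_cons_inj _).mpr hpre⟩

section Splice

variable {Q : G.Walk m b}

theorem IsDirected.exists_openTail_path_append (hQ : Q.IsDirected) (hQp : Q.IsPath)
    (hQC : ∀ v ∈ Q.support, v ∉ C) :
    ∀ {x : V} (w : G.Walk x m) (ph : Prop), w.openTail C ph → w.IsPath →
      ∃ R : G.Walk x b,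
        R.openTail C ph ∧ R.IsPath ∧ R.support ⊆ w.support ++ Q.support := by
  intro x w ph hw hp
  by_cases hx : x ∈ Q.support
  · obtain ⟨S, hS, hsuf⟩ := hQ.exists_suffix hx
    exact ⟨S, hS.openTail ph fun v hv => hQC v (hsuf.subset hv), hQp.sublist hsuf.sublist,
      fun v hv => List.mem_append_right _ (hsuf.subset hv)⟩
  · cases w with
    | nil => exact absurd Q.start_mem_support hx
    | cons e h w =>
      obtain ⟨hcoll, hncoll, hopen⟩ := hw
      obtain ⟨R, hR, hRp, hRsub⟩ := hQ.exists_openTail_path_append hQp hQC w _ hopen hp.of_cons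
      refine ⟨cons e h R, ⟨hcoll, hncoll, hR⟩, hRp.cons h fun hxR => ?_,
        List.cons_subset_cons x hRsub⟩
      rcases List.mem_append.mp (hRsub hxR) with hxw | hxQ
      · exact hp.not_mem_of_cons hxw
      · exact hx hxQ

theorem IsDirected.exists_openGiven_path_append (hQ : Q.IsDirected) (hQp : Q.IsPath)
    (hQC : ∀ v ∈ Q.support, v ∉ C) (w : G.Walk x m) (hw : w.openGiven C) (hp : w.IsPath) :
    ∃ R : G.Walk x b, R.IsPath ∧ R.openGiven C := by
  by_cases hx : x ∈ Q.support
  · obtain ⟨S, hS, hsuf⟩ := hQ.exists_suffix hx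
    exact ⟨S, hQp.sublist hsuf.sublist, hS.openGiven fun v hv => hQC v (hsuf.subset hv)⟩
  · cases w with
    | nil => exact absurd Q.start_mem_support hx
    | cons e h w =>
      obtain ⟨R, hR, hRp, hRsub⟩ := hQ.exists_openTail_path_append hQp hQC w _ hw hp.of_cons
      refine ⟨cons e h R, hRp.cons h fun hxR => ?_, hR⟩
      rcases List.mem_append.mp (hRsub hxR) with hxw | hxQ
      · exact hp.not_mem_of_cons hxw
      · exact hx hxQ

end Splice

end Walk

theorem mSep.symm {A B C : Set V} (h : G.mSep A B C) : G.mSep B A C :=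
  fun b hb a ha w hw hopen => h a ha b hb w.reverse hw.reverse (Walk.openGiven_reverse.mpr hopen)

theorem mSep.not_reflTransGen_of_not_mSep_union {a b s : V} {D : Set V}
    (hsep : G.mSep {a} {b} D) (hnsep : ¬ G.mSep {a} {b} (D ∪ {s})) :
    ¬ ReflTransGen G.dir s b := by
  intro hsb
  obtain ⟨w, hw, hopen⟩ : ∃ w : G.Walk a b, w.IsPath ∧ w.openGiven (D ∪ {s}) := by
    simpa [mSep] using hnsep
  obtain ⟨m, ⟨d, hd, hmd⟩, hmD, w₁, hw₁, hpre⟩ :=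
    Walk.exists_openGiven_prefix Set.subset_union_left w hopen (hsep a rfl b rfl w hw)
  have hms : ReflTransGen G.dir m s := by
    rcases hd with hd | rfl
    · exact absurd hmd (hmD d hd)
    · exact hmd
  obtain ⟨Q, hQ, hQp⟩ := Walk.exists_isDirected_isPath (hms.trans hsb)
  obtain ⟨R, hR, hRopen⟩ := hQ.exists_openGiven_path_append hQp
    (fun v hv hvD => hmD v hvD (hQ.reflTransGen hv)) w₁ hw₁ (hw.sublist hpre.sublist)
  exact hsep a rfl b rfl R hR hRopen

end MDAG

theorem unblocking_vertex_not_ancestor_general {V : Type} (H : V → V → Prop)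
    (a b s : V) (D : Set V)
    (hsep : dSep H {a} {b} D)
    (hnsep : ¬ dSep H {a} {b} (D ∪ {s})) :
    ¬ Relation.ReflTransGen H s b ∧ ¬ Relation.ReflTransGen H s a :=
  ⟨MDAG.mSep.not_reflTransGen_of_not_mSep_union hsep hnsep,
    MDAG.mSep.not_reflTransGen_of_not_mSep_union hsep.symm fun h => hnsep h.symm⟩

/-- In a DAG, if `a ⊥_d b ∣ D` and `a` and `b` are d-connected given
`D ∪ {s}`, then `s` is not an ancestor of `b`, and (by symmetry) not an
ancestor of `a` (ancestry via directed paths, possibly of length 0). -/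
theorem unblocking_vertex_not_ancestor {V : Type} [Fintype V] (H : V → V → Prop)
    (hacyclic : ∀ x : V, ¬ Relation.TransGen H x x)
    (a b s : V) (D : Set V)
    (hsep : dSep H {a} {b} D)
    (hnsep : ¬ dSep H {a} {b} (D ∪ {s})) :
    ¬ Relation.ReflTransGen H s b ∧ ¬ Relation.ReflTransGen H s a :=
  unblocking_vertex_not_ancestor_general H a b s D hsep hnsep
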